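/- arXiv:2203.01832 — 2 statements merged into one kernel-verified Lean document; each statement's English description precedes it below -/
import Mathlib

section
/- With x_n = ∏_{k ≤ n} (p_k^2 − χ(p_k)) and y_n = ∏_{k ≤ n} p_k^2 over the odd primes p_k, the sequence of rationals y_n/x_n converges to the Catalan constant β(2) as n → ∞. -/
/-- The non-principal Dirichlet character mod 4. -/
def chi (n : ℕ) : ℤ :=
  if n % 4 = 1 then 1 else if n % 4 = 3 then -1 else 0

/-- The k-th odd prime (0-indexed). -/
noncomputable def oddPrime (k : ℕ) : ℕ :=
  Nat.nth (fun q => q.Prime ∧ q % 2 = 1) k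

noncomputable def X (n : ℕ) : ℤ :=
  ∏ k ∈ Finset.range (n + 1), ((oddPrime k : ℤ) ^ 2 - chi (oddPrime k))

noncomputable def Y (n : ℕ) : ℤ :=
  ∏ k ∈ Finset.range (n + 1), (oddPrime k : ℤ) ^ 2

/-!
The function `n ↦ χ(n) / n²` is completely multiplicative and absolutely summable, so its
sum `L(2, χ) = β(2)` is the Euler product `∏_p (1 - χ(p)/p²)⁻¹`. The factor at `p = 2` is `1`,
and at an odd prime it equals `p² / (p² - χ(p))`; hence the partial products over the first
`n + 1` odd primes are exactly `Y n / X n`.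
-/

open Filter

theorem chi_mul (m n : ℕ) : chi (m * n) = chi m * chi n := by
  unfold chi
  rw [Nat.mul_mod]
  have hm : m % 4 < 4 := Nat.mod_lt _ (by norm_num)
  have hn : n % 4 < 4 := Nat.mod_lt _ (by norm_num)
  interval_cases m % 4 <;> interval_cases n % 4 <;> rfl

theorem abs_chi_le_one (n : ℕ) : |chi n| ≤ 1 := by
  unfold chi
  split_ifs <;> norm_num

theorem chi_two_mul (m : ℕ) : chi (2 * m) = 0 := by
  unfold chi
  split_ifs <;> omega

theorem chi_two_mul_add_one (m : ℕ) : chi (2 * m + 1) = (-1) ^ m := by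
  unfold chi
  rcases Nat.even_or_odd m with ⟨j, rfl⟩ | ⟨j, rfl⟩
  · rw [if_pos (by omega), Even.neg_one_pow ⟨j, rfl⟩]
  · rw [if_neg (by omega), if_pos (by omega), Odd.neg_one_pow ⟨j, rfl⟩]

noncomputable def chiDivSq : ℕ →*₀ ℝ where
  toFun n := chi n / (n : ℝ) ^ 2
  map_zero' := by simp [chi]
  map_one' := by simp [chi]
  map_mul' m n := by
    push_cast [chi_mul, mul_pow]
    exact mul_div_mul_comm _ _ _ _

theorem chiDivSq_apply (n : ℕ) : chiDivSq n = chi n / (n : ℝ) ^ 2 := rfl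

theorem summable_norm_chiDivSq : Summable (‖chiDivSq ·‖) := by
  refine (Real.summable_one_div_nat_pow.mpr one_lt_two).of_nonneg_of_le (fun _ ↦ norm_nonneg _)
    fun n ↦ ?_
  rw [chiDivSq_apply, norm_div, norm_pow, Real.norm_natCast, Real.norm_eq_abs]
  gcongr
  exact_mod_cast abs_chi_le_one n

theorem tsum_chiDivSq : ∑' n, chiDivSq n = ∑' m : ℕ, (-1 : ℝ) ^ m / (2 * m + 1) ^ 2 := by
  have hval :
      (fun m ↦ chiDivSq (2 * m + 1)) = fun m : ℕ ↦ (-1 : ℝ) ^ m / (2 * m + 1) ^ 2 := by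
    ext m
    rw [chiDivSq_apply, chi_two_mul_add_one]
    push_cast
    rfl
  have hodd : Summable (fun m ↦ chiDivSq (2 * m + 1)) :=
    summable_norm_chiDivSq.of_norm.comp_injective (i := fun m ↦ 2 * m + 1)
      fun a b h ↦ by simpa using h
  have heven : HasSum (fun m ↦ chiDivSq (2 * m)) 0 := by
    simp only [chiDivSq_apply, chi_two_mul, Int.cast_zero, zero_div]
    exact hasSum_zero
  rw [(heven.even_add_odd hodd.hasSum).tsum_eq, zero_add, hval]

theorem setOf_prime_and_odd_infinite : {q : ℕ | q.Prime ∧ q % 2 = 1}.Infinite := by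
  refine Set.infinite_of_forall_exists_gt fun a ↦ ?_
  obtain ⟨p, hle, hp⟩ := Nat.exists_infinite_primes (a + 3)
  exact ⟨p, ⟨hp, Nat.odd_iff.mp (hp.odd_of_ne_two (by omega))⟩, by omega⟩

theorem range_oddPrime : Set.range oddPrime = {q : ℕ | q.Prime ∧ q % 2 = 1} :=
  Nat.range_nth_of_infinite setOf_prime_and_odd_infinite

theorem oddPrime_prime (k : ℕ) : (oddPrime k).Prime :=
  (Nat.nth_mem_of_infinite setOf_prime_and_odd_infinite k).1

theorem oddPrime_injective : Function.Injective oddPrime :=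
  Nat.nth_injective setOf_prime_and_odd_infinite

theorem hasProd_oddPrime_inv_one_sub {F : Type*} [NormedField F] [CompleteSpace F]
    {f : ℕ →*₀ F} (hsum : Summable (‖f ·‖)) (h2 : f 2 = 0) :
    HasProd (fun k ↦ (1 - f (oddPrime k))⁻¹) (∑' n, f n) := by
  let e (k : ℕ) : Nat.Primes := ⟨oddPrime k, oddPrime_prime k⟩
  have he : Function.Injective e := fun a b h ↦ oddPrime_injective (congrArg Subtype.val h)
  have hrange (p : Nat.Primes) (hp : p ∉ Set.range e) : (1 - f p)⁻¹ = 1 := by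
    have : (p : ℕ) = 2 := by
      by_contra hne
      obtain ⟨k, hk⟩ : (p : ℕ) ∈ Set.range oddPrime :=
        range_oddPrime ▸ ⟨p.2, Nat.odd_iff.mp (p.2.odd_of_ne_two hne)⟩
      exact hp ⟨k, Subtype.ext hk⟩
    simp [this, h2]
  exact (he.hasProd_iff hrange).mpr
    (EulerProduct.eulerProduct_completely_multiplicative_hasProd hsum)

theorem inv_one_sub_chiDivSq {n : ℕ} (hn : n ≠ 0) :
    (1 - chiDivSq n)⁻¹ = (n : ℝ) ^ 2 / ((n : ℝ) ^ 2 - chi n) := by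
  rw [chiDivSq_apply, one_sub_div (by positivity), inv_div]

theorem Y_div_X_eq_prod (n : ℕ) :
    (Y n : ℝ) / X n = ∏ k ∈ Finset.range (n + 1), (1 - chiDivSq (oddPrime k))⁻¹ := by
  simp only [X, Y, inv_one_sub_chiDivSq (oddPrime_prime _).ne_zero]
  push_cast
  exact (Finset.prod_div_distrib ..).symm

theorem ratio_tendsto_catalan :
    Filter.Tendsto (fun n => (Y n : ℝ) / (X n : ℝ)) Filter.atTop
      (nhds (∑' n : ℕ, (-1 : ℝ) ^ n / (2 * n + 1) ^ 2)) := by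
  have hprod := hasProd_oddPrime_inv_one_sub summable_norm_chiDivSq (by simp [chiDivSq_apply, chi])
  rw [← tsum_chiDivSq, funext Y_div_X_eq_prod]
  exact hprod.tendsto_prod_nat.comp (tendsto_add_atTop_nat 1)
end

section
/- Brun's irrationality criterion: let (x_n) and (y_n) be sequences of positive integers, both strictly increasing, such that (i) y_n/x_n converges to a nonzero real number α, (ii) y_n/x_n < y_{n+1}/x_{n+1} for all n, and (iii) (y_{n+1} − y_n)/(x_{n+1} − x_n) > (y_{n+2} − y_{n+1})/(x_{n+2} − x_{n+1}) for all n. Then α is irrational. -/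
/-!
The ratios `yₙ / xₙ` increase to `α`, so each lies strictly below `α`. The points `(xₙ, yₙ)` form
a concave polygon, so every later point lies below the line through `(xₙ, yₙ)` with slope `dₙ`, the
`n`-th chord slope; dividing by `xₘ → ∞` gives `α ≤ dₙ₊₁ < dₙ`. Hence `α xₙ - yₙ` is a positive and
strictly decreasing sequence. If `α = p / q`, then `p xₙ - q yₙ` would be a strictly decreasing
sequence of positive integers, which is impossible.
-/

open Filter Topology

theorem irrational_of_strictAnti_of_pos {α : ℝ} (x y : ℕ → ℤ)
    (hanti : StrictAnti fun n => α * x n - y n) (hpos : ∀ n, 0 < α * x n - y n) :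
    Irrational α := by
  rintro ⟨q, rfl⟩
  set a : ℕ → ℤ := fun n => q.num * x n - q.den * y n
  have hden : (0 : ℝ) < q.den := by exact_mod_cast q.pos
  have ha : ∀ n, (a n : ℝ) = q.den * (q * x n - y n) := fun n => by
    simp only [a, Int.cast_sub, Int.cast_mul, Int.cast_natCast, Rat.cast_def]
    field_simp
  have ha_pos : ∀ n, 0 < a n := fun n => by
    have := mul_pos hden (hpos n)
    rw [← ha] at this
    exact_mod_cast this
  refine not_strictAnti_of_wellFoundedLT (fun n => (a n).toNat) fun m n hmn => ?_
  have : a n < a m := by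
    have := mul_lt_mul_of_pos_left (hanti hmn) hden
    rw [← ha, ← ha] at this
    exact_mod_cast this
  have := ha_pos n
  show (a n).toNat < (a m).toNat
  omega

theorem le_of_tendsto_div_of_eventually_le_affine {ι : Type*} {l : Filter ι} [l.NeBot]
    {X Y : ι → ℝ} {α c d : ℝ} (hX : Tendsto X l atTop)
    (hlim : Tendsto (fun i => Y i / X i) l (𝓝 α)) (hle : ∀ᶠ i in l, Y i ≤ c + d * X i) :
    α ≤ d := by
  have hline : Tendsto (fun i => c / X i + d) l (𝓝 d) := by
    simpa using (tendsto_const_nhds.div_atTop hX).add_const d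
  refine le_of_tendsto_of_tendsto hlim hline ?_
  filter_upwards [hle, hX.eventually_gt_atTop 0] with i hi hpos
  rw [div_add' _ _ _ hpos.ne', div_le_div_iff_of_pos_right hpos]
  linarith

section ChordSlope

variable (X Y : ℕ → ℝ)

noncomputable def chordSlope (n : ℕ) : ℝ := (Y (n + 1) - Y n) / (X (n + 1) - X n)

variable {X Y}

theorem le_add_chordSlope_mul (hX : StrictMono X) (hd : Antitone (chordSlope X Y)) {n m : ℕ}
    (hnm : n ≤ m) : Y m ≤ Y n + chordSlope X Y n * (X m - X n) := by
  induction m, hnm using Nat.le_induction with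
  | base => simp
  | succ m hnm ih =>
    have hgap : 0 < X (m + 1) - X m := sub_pos.2 (hX m.lt_succ_self)
    have hstep : Y (m + 1) = Y m + chordSlope X Y m * (X (m + 1) - X m) := by
      rw [chordSlope, div_mul_cancel₀ _ hgap.ne']
      ring
    have := mul_le_mul_of_nonneg_right (hd hnm) hgap.le
    rw [hstep]
    linarith

theorem le_chordSlope_of_tendsto {α : ℝ} (hX : StrictMono X) (hd : Antitone (chordSlope X Y))
    (hXtop : Tendsto X atTop atTop) (hlim : Tendsto (fun m => Y m / X m) atTop (𝓝 α)) (n : ℕ) :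
    α ≤ chordSlope X Y n :=
  le_of_tendsto_div_of_eventually_le_affine (c := Y n - chordSlope X Y n * X n) hXtop hlim <|
    (eventually_ge_atTop n).mono fun _ hm =>
      (le_add_chordSlope_mul hX hd hm).trans_eq (by ring)

end ChordSlope

theorem brun_irrationality_criterion_general (x y : ℕ → ℕ) (α : ℝ)
    (hx : StrictMono x)
    (hxpos : ∀ n, 0 < x n)
    (hlim : Filter.Tendsto (fun n => (y n : ℝ) / (x n : ℝ)) Filter.atTop (nhds α))
    (hinc : ∀ n, (y n : ℝ) / (x n : ℝ) < (y (n + 1) : ℝ) / (x (n + 1) : ℝ))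
    (hdec : ∀ n, ((y (n + 1) : ℝ) - y n) / ((x (n + 1) : ℝ) - x n) >
        ((y (n + 2) : ℝ) - y (n + 1)) / ((x (n + 2) : ℝ) - x (n + 1))) :
    Irrational α := by
  set X : ℕ → ℝ := fun n => x n
  set Y : ℕ → ℝ := fun n => y n
  have hX : StrictMono X := Nat.strictMono_cast.comp hx
  have hslope : StrictAnti (chordSlope X Y) := strictAnti_nat_of_succ_lt hdec
  have hratio_lt : ∀ n, Y n / X n < α := fun n =>
    (hinc n).trans_le ((strictMono_nat_of_lt_succ hinc).monotone.ge_of_tendsto hlim (n + 1))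
  have hslope_gt : ∀ n, α < chordSlope X Y n := fun n =>
    (le_chordSlope_of_tendsto hX hslope.antitone
      (tendsto_natCast_atTop_atTop.comp hx.tendsto_atTop) hlim (n + 1)).trans_lt
      (hslope n.lt_succ_self)
  refine irrational_of_strictAnti_of_pos (fun n => x n) (fun n => y n)
    (strictAnti_nat_of_succ_lt fun n => ?_) fun n => ?_
  · have := (lt_div_iff₀ (sub_pos.2 (hX n.lt_succ_self))).1 (hslope_gt n)
    push_cast
    linarith
  · have := (div_lt_iff₀ (Nat.cast_pos.2 (hxpos n) : (0 : ℝ) < X n)).1 (hratio_lt n)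
    push_cast
    linarith

theorem brun_irrationality_criterion (x y : ℕ → ℕ) (α : ℝ)
    (hx : StrictMono x) (hy : StrictMono y)
    (hxpos : ∀ n, 0 < x n) (hypos : ∀ n, 0 < y n)
    (hα : α ≠ 0)
    (hlim : Filter.Tendsto (fun n => (y n : ℝ) / (x n : ℝ)) Filter.atTop (nhds α))
    (hinc : ∀ n, (y n : ℝ) / (x n : ℝ) < (y (n + 1) : ℝ) / (x (n + 1) : ℝ))
    (hdec : ∀ n, ((y (n + 1) : ℝ) - y n) / ((x (n + 1) : ℝ) - x n) >
        ((y (n + 2) : ℝ) - y (n + 1)) / ((x (n + 2) : ℝ) - x (n + 1))) :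
    Irrational α :=
  brun_irrationality_criterion_general x y α hx hxpos hlim hinc hdec
end
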